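/- With the finite-horizon safety value V_T defined by V_0(z) = ℓ(z), V_{T+1}(z) = max_{a} min_{b ∈ B(z)} min{ ℓ(z), V_T(f(z,a,b)) }, the value equals the game outcome: V_T(z_0) = max over controller policies (as functions of history) min over adversary sequences of min_{0 ≤ t ≤ T} ℓ(z_t), where z_{t+1} = f(z_t, a_t, b_t). In particular, state-feedback (Markov) policies suffice to achieve the optimum. -/

import Mathlib

/-- Finite-horizon safety value:
`V 0 z = ℓ z`, `V (T+1) z = max_a min_{b ∈ Badm z} min (ℓ z) (V T (f z a b))`. -/
noncomputable def V {Z A B : Type*} [Fintype A] [Nonempty A]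
    (f : Z → A → B → Z) (Badm : Z → Finset B) (hB : ∀ z, (Badm z).Nonempty)
    (ℓ : Z → ℝ) : ℕ → Z → ℝ
  | 0, z => ℓ z
  | T + 1, z =>
    Finset.univ.sup' Finset.univ_nonempty fun a : A =>
      (Badm z).inf' (hB z) fun b => min (ℓ z) (V f Badm hB ℓ T (f z a b))

/-- History of states (most recent first) under a history-dependent policy
`π : List Z → A` and adversary sequence `b`. -/
def histList {Z A B : Type*} [Inhabited Z] (f : Z → A → B → Z)
    (π : List Z → A) (b : ℕ → B) (z0 : Z) : ℕ → List Z
  | 0 => [z0]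
  | t + 1 =>
    let h := histList f π b z0 t
    f h.headI (π h) (b t) :: h

/-- State at time `t` under a history-dependent policy. -/
def hstate {Z A B : Type*} [Inhabited Z] (f : Z → A → B → Z)
    (π : List Z → A) (b : ℕ → B) (z0 : Z) (t : ℕ) : Z :=
  (histList f π b z0 t).headI

/-- Closed-loop trajectory under a state-feedback (Markov) policy. -/
def traj {Z A B : Type*} (f : Z → A → B → Z) (π : Z → A) (b : ℕ → B) (z0 : Z) : ℕ → Z
  | 0 => z0
  | t + 1 => f (traj f π b z0 t) (π (traj f π b z0 t)) (b t)

/-!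
Against any history-dependent policy the adversary answers greedily, choosing at time `t` a
`b` that attains the inner minimum at horizon `T - t - 1`; then
`min (ℓ z_t) (V (T-t-1) z_{t+1}) ≤ V (T-t) z_t` along the play, which telescopes to the upper
bound. For the lower bound a single state-feedback action suffices: at `z` play an optimal
action for the largest horizon `m ≤ T` with `V T z₀ ≤ V m z`. Since `V` is antitone in the
horizon, this action keeps `V T z₀ ≤ V (T-t) z_t` along every play.
-/
open Finset

section History

variable {Z A B : Type*} [Inhabited Z] (f : Z → A → B → Z)

lemma hstate_succ (π : List Z → A) (b : ℕ → B) (z0 : Z) (t : ℕ) :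
    hstate f π b z0 (t + 1) = f (hstate f π b z0 t) (π (histList f π b z0 t)) (b t) := rfl

lemma hstate_comp_headI (σ : Z → A) (b : ℕ → B) (z0 : Z) (t : ℕ) :
    hstate f (fun h => σ h.headI) b z0 t = traj f σ b z0 t := by
  induction t with
  | zero => rfl
  | succ t ih => rw [hstate_succ, traj, ← ih]; rfl

lemma exists_seq_eq_feedback (π : List Z → A) (z0 : Z) (β : List Z → ℕ → B) :
    ∃ b : ℕ → B, ∀ t, b t = β (histList f π b z0 t) t := by
  let H : ℕ → List Z := fun t => Nat.rec [z0] (fun t h => f h.headI (π h) (β h t) :: h) t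
  refine ⟨fun t => β (H t) t, fun t => ?_⟩
  suffices histList f π (fun t => β (H t) t) z0 t = H t by rw [this]
  induction t with
  | zero => rfl
  | succ t ih => simp only [histList, ih]; rfl

end History

section Value

variable {Z A B : Type*} [Fintype A] [Nonempty A]
  (f : Z → A → B → Z) (Badm : Z → Finset B) (hB : ∀ z, (Badm z).Nonempty)
  (ℓ : Z → ℝ)

lemma V_le_ell (n : ℕ) (z : Z) : V f Badm hB ℓ n z ≤ ℓ z := by
  cases n with
  | zero => rfl
  | succ n =>
    obtain ⟨b, hb⟩ := hB z
    exact sup'_le _ _ fun a _ => (inf'_le _ hb).trans (min_le_left _ _)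

lemma V_antitone (z : Z) : Antitone fun n => V f Badm hB ℓ n z := by
  suffices h : ∀ n z, V f Badm hB ℓ (n + 1) z ≤ V f Badm hB ℓ n z from
    antitone_nat_of_succ_le fun n => h n z
  intro n
  induction n with
  | zero => exact fun z => V_le_ell f Badm hB ℓ 1 z
  | succ n ih =>
    intro z
    refine sup'_mono_fun fun a _ => inf'_mono_fun fun b _ => ?_
    exact min_le_min le_rfl (ih _)

lemma exists_mem_min_le_V_succ (z : Z) (a : A) (n : ℕ) :
    ∃ b ∈ Badm z, min (ℓ z) (V f Badm hB ℓ n (f z a b)) ≤ V f Badm hB ℓ (n + 1) z := by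
  obtain ⟨b, hb, hmin⟩ :=
    exists_mem_eq_inf' (hB z) fun b => min (ℓ z) (V f Badm hB ℓ n (f z a b))
  exact ⟨b, hb, hmin ▸ le_sup' (fun a => (Badm z).inf' (hB z) fun b =>
    min (ℓ z) (V f Badm hB ℓ n (f z a b))) (mem_univ a)⟩

lemma inf'_range_le_V (n : ℕ) (z : ℕ → Z)
    (hstep : ∀ t < n, min (ℓ (z t)) (V f Badm hB ℓ (n - (t + 1)) (z (t + 1))) ≤
      V f Badm hB ℓ (n - t) (z t)) :
    (range (n + 1)).inf' nonempty_range_add_one (fun t => ℓ (z t)) ≤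
      V f Badm hB ℓ n (z 0) := by
  induction n generalizing z with
  | zero => exact inf'_le _ (self_mem_range_succ 0)
  | succ n ih =>
    have htail := ih (fun t => z (t + 1)) fun t ht => by simpa using hstep (t + 1) (by omega)
    calc (range (n + 2)).inf' nonempty_range_add_one (fun t => ℓ (z t))
        ≤ min (ℓ (z 0))
            ((range (n + 1)).inf' nonempty_range_add_one fun t => ℓ (z (t + 1))) :=
          le_min (inf'_le _ (by simp)) <| le_inf' _ _ fun t ht =>
            inf'_le _ (mem_range.2 (Nat.succ_lt_succ (mem_range.1 ht)))
      _ ≤ min (ℓ (z 0)) (V f Badm hB ℓ n (z 1)) := min_le_min le_rfl htail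
      _ ≤ V f Badm hB ℓ (n + 1) (z 0) := by simpa using hstep 0 (by omega)

lemma exists_adversary_inf'_le_V [Inhabited Z] (n : ℕ) (z0 : Z) (π : List Z → A) :
    ∃ b : ℕ → B, (∀ t, b t ∈ Badm (hstate f π b z0 t)) ∧
      (range (n + 1)).inf' nonempty_range_add_one (fun t => ℓ (hstate f π b z0 t)) ≤
        V f Badm hB ℓ n z0 := by
  choose β hβ hβle using fun (h : List Z) (t : ℕ) =>
    exists_mem_min_le_V_succ f Badm hB ℓ h.headI (π h) (n - (t + 1))
  obtain ⟨b, hb⟩ := exists_seq_eq_feedback f π z0 β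
  refine ⟨b, fun t => hb t ▸ hβ _ t, inf'_range_le_V f Badm hB ℓ n _ fun t ht => ?_⟩
  have hn : n - t = n - (t + 1) + 1 := by omega
  rw [hstate_succ, hn, hb t]
  exact hβle _ t

lemma exists_feedback_le_V (c : ℝ) (n : ℕ) :
    ∃ σ : Z → A, ∀ z, ∀ k < n, c ≤ V f Badm hB ℓ (k + 1) z →
      ∀ b ∈ Badm z, c ≤ V f Badm hB ℓ k (f z (σ z) b) := by
  classical
  choose a ha using fun (z : Z) (k : ℕ) => exists_mem_eq_sup' (univ_nonempty (α := A))
    fun a => (Badm z).inf' (hB z) fun b => min (ℓ z) (V f Badm hB ℓ k (f z a b))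
  refine ⟨fun z => a z (Nat.findGreatest (fun m => c ≤ V f Badm hB ℓ m z) n - 1),
    fun z k hk hc b hb => ?_⟩
  set m := Nat.findGreatest (fun m => c ≤ V f Badm hB ℓ m z) n
  have hkm : k + 1 ≤ m := Nat.le_findGreatest hk hc
  calc c ≤ V f Badm hB ℓ (m - 1 + 1) z := by
        rw [Nat.sub_add_cancel (by omega)]
        exact Nat.findGreatest_spec (P := fun m => c ≤ V f Badm hB ℓ m z) hk hc
    _ = _ := (ha z (m - 1)).2
    _ ≤ min (ℓ z) (V f Badm hB ℓ (m - 1) (f z (a z (m - 1)) b)) := inf'_le _ hb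
    _ ≤ V f Badm hB ℓ k (f z (a z (m - 1)) b) :=
        (min_le_right _ _).trans (V_antitone f Badm hB ℓ _ (by omega))

lemma exists_feedback_V_le_inf' (n : ℕ) (z0 : Z) :
    ∃ σ : Z → A, ∀ b : ℕ → B, (∀ t, b t ∈ Badm (traj f σ b z0 t)) →
      V f Badm hB ℓ n z0 ≤
        (range (n + 1)).inf' nonempty_range_add_one (fun t => ℓ (traj f σ b z0 t)) := by
  obtain ⟨σ, hσ⟩ := exists_feedback_le_V f Badm hB ℓ (V f Badm hB ℓ n z0) n
  refine ⟨σ, fun b hb => le_inf' _ _ fun t ht => ?_⟩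
  have hinv : ∀ t ≤ n, V f Badm hB ℓ n z0 ≤ V f Badm hB ℓ (n - t) (traj f σ b z0 t) := by
    intro t
    induction t with
    | zero => exact fun _ => le_rfl
    | succ t ih =>
      intro ht
      have hn : n - t = n - (t + 1) + 1 := by omega
      exact hσ _ _ (by omega) (hn ▸ ih (by omega)) _ (hb t)
  exact (hinv t (Nat.lt_succ_iff.1 (mem_range.1 ht))).trans (V_le_ell f Badm hB ℓ _ _)

end Value

/-- The finite-horizon safety value equals the max–min game outcome
`min_{0 ≤ t ≤ T} ℓ(z_t)` over history-dependent policies and admissible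
adversary sequences; moreover state-feedback (Markov) policies suffice. -/
theorem value_equals_game_outcome {Z A B : Type*} [Inhabited Z] [Fintype A] [Nonempty A]
    (f : Z → A → B → Z) (Badm : Z → Finset B) (hB : ∀ z, (Badm z).Nonempty)
    (ℓ : Z → ℝ) (T : ℕ) (z0 : Z) :
    (∃ π : List Z → A, ∀ b : ℕ → B,
      (∀ t, b t ∈ Badm (hstate f π b z0 t)) →
      V f Badm hB ℓ T z0 ≤
        (Finset.range (T + 1)).inf' Finset.nonempty_range_add_one
          (fun t => ℓ (hstate f π b z0 t))) ∧
    (∀ π : List Z → A, ∃ b : ℕ → B,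
      (∀ t, b t ∈ Badm (hstate f π b z0 t)) ∧
      (Finset.range (T + 1)).inf' Finset.nonempty_range_add_one
          (fun t => ℓ (hstate f π b z0 t)) ≤ V f Badm hB ℓ T z0) ∧
    (∃ π : Z → A, ∀ b : ℕ → B,
      (∀ t, b t ∈ Badm (traj f π b z0 t)) →
      V f Badm hB ℓ T z0 ≤
        (Finset.range (T + 1)).inf' Finset.nonempty_range_add_one
          (fun t => ℓ (traj f π b z0 t))) := by
  obtain ⟨σ, hσ⟩ := exists_feedback_V_le_inf' f Badm hB ℓ T z0
  refine ⟨⟨fun h => σ h.headI, fun b hb => ?_⟩,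
    exists_adversary_inf'_le_V f Badm hB ℓ T z0, ⟨σ, hσ⟩⟩
  simp only [hstate_comp_headI] at hb ⊢
  exact hσ b hb
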